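/- With i and r as above, the straight-line homotopy H : D₂(n) × [0,1] → D₂(n), keeping the centers fixed and linearly interpolating the radii between the given radii and the common radius ρ(centers), is well defined (at every time t the disks remain pairwise disjoint and inside the unit disk) and continuous, and gives a homotopy between i∘r and the identity on D₂(n). In particular F(n) is a deformation retract of D₂(n). -/

import Mathlib

/-- The plane. -/
abbrev Plane := EuclideanSpace ℝ (Fin 2)

/-- `D₂(n)`: configurations of `n` disjoint open round disks in the open unit
disk, given by centres and radii. -/
def Disks (n : ℕ) : Set ((Fin n → Plane) × (Fin n → ℝ)) :=
  {p | (∀ a, 0 < p.2 a) ∧ (∀ a, ‖p.1 a‖ + p.2 a < 1) ∧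
    Pairwise fun a b => p.2 a + p.2 b < dist (p.1 a) (p.1 b)}

/-- `ρ(x) = (1/3)·min({|xᵢ − xⱼ| : i ≠ j} ∪ {1 − |xᵢ|})`. -/
noncomputable def rho {n : ℕ} (x : Fin n → Plane) : ℝ :=
  (1 / 3) * sInf ({d | ∃ a b, a ≠ b ∧ d = dist (x a) (x b)} ∪
    {d | ∃ a, d = 1 - ‖x a‖})

/-- The straight-line homotopy keeping the centres fixed and interpolating the
radii between the common radius `ρ(centres)` and the given radii. -/
noncomputable def Htpy {n : ℕ} (p : (Fin n → Plane) × (Fin n → ℝ)) (t : ℝ) :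
    (Fin n → Plane) × (Fin n → ℝ) :=
  (p.1, fun a => (1 - t) * rho p.1 + t * p.2 a)

/-- Auxiliary finite index type enumerating the constraints. -/
abbrev Idx (n : ℕ) := Fin n ⊕ {q : Fin n × Fin n // q.1 ≠ q.2}

/-- The constraint quantities. -/
noncomputable def Fv {n : ℕ} (x : Fin n → Plane) : Idx n → ℝ
  | Sum.inl a => 1 - ‖x a‖
  | Sum.inr q => dist (x q.1.1) (x q.1.2)

lemma range_Fv {n : ℕ} (x : Fin n → Plane) :
    ({d | ∃ a b, a ≠ b ∧ d = dist (x a) (x b)} ∪ {d | ∃ a, d = 1 - ‖x a‖}) =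
      Set.range (Fv x) := by
  ext d
  constructor
  · rintro (⟨a, b, hab, rfl⟩ | ⟨a, rfl⟩)
    · exact ⟨Sum.inr ⟨(a, b), hab⟩, rfl⟩
    · exact ⟨Sum.inl a, rfl⟩
  · rintro ⟨(a | ⟨⟨a, b⟩, hab⟩), rfl⟩
    · exact Or.inr ⟨a, rfl⟩
    · exact Or.inl ⟨a, b, hab, rfl⟩

lemma rho_eq {n : ℕ} [Nonempty (Fin n)] (x : Fin n → Plane) :
    rho x = (1 / 3) * Finset.univ.inf' Finset.univ_nonempty (Fv x) := by
  rw [rho, range_Fv, Finset.inf'_eq_csInf_image, Finset.coe_univ, Set.image_univ]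

lemma rho_le {n : ℕ} [Nonempty (Fin n)] (x : Fin n → Plane) (i : Idx n) :
    3 * rho x ≤ Fv x i := by
  have h : Finset.univ.inf' Finset.univ_nonempty (Fv x) ≤ Fv x i :=
    Finset.inf'_le (Fv x) (Finset.mem_univ i)
  rw [rho_eq]
  linarith

lemma convex_pos {t A B : ℝ} (ht0 : 0 ≤ t) (ht1 : t ≤ 1) (hA : 0 < A) (hB : 0 < B) :
    0 < (1 - t) * A + t * B := by
  rcases le_total A B with h | h
  · nlinarith [mul_nonneg ht0 (sub_nonneg.2 h)]
  · nlinarith [mul_nonneg (sub_nonneg.2 ht1) (sub_nonneg.2 h)]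

lemma convex_lt {t A B C : ℝ} (ht0 : 0 ≤ t) (ht1 : t ≤ 1) (hA : A < C) (hB : B < C) :
    (1 - t) * A + t * B < C := by
  rcases lt_or_eq_of_le ht1 with h | h
  · nlinarith [mul_pos (by linarith : (0:ℝ) < 1 - t) (sub_pos.2 hA),
      mul_nonneg ht0 (sub_nonneg.2 hB.le)]
  · subst h; linarith

lemma rho_pos {n : ℕ} [Nonempty (Fin n)] {p : (Fin n → Plane) × (Fin n → ℝ)}
    (hp : p ∈ Disks n) : 0 < rho p.1 := by
  obtain ⟨hr, hc, hd⟩ := hp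
  obtain ⟨i, -, hi⟩ :=
    Finset.exists_mem_eq_inf' (s := (Finset.univ : Finset (Idx n)))
      Finset.univ_nonempty (Fv p.1)
  rw [rho_eq, hi]
  have : 0 < Fv p.1 i := by
    cases i with
    | inl a =>
      have := hr a; have := hc a
      simp only [Fv]; linarith
    | inr q =>
      have := hd q.2; have := hr q.1.1; have := hr q.1.2
      simp only [Fv]; linarith
  linarith

/-- The straight-line homotopy `H` between `i ∘ r` and `id` on `D₂(n)` is well
defined (at each time the disks remain disjoint and inside the unit disk) and
continuous, equals `i ∘ r` at `t = 0` and the identity at `t = 1`.  In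
particular `F(n)` is a deformation retract of `D₂(n)`. -/
theorem stmt12 (n : ℕ) (hn : 1 ≤ n) :
    (∀ p ∈ Disks n, ∀ t ∈ Set.Icc (0 : ℝ) 1, Htpy p t ∈ Disks n) ∧
    ContinuousOn (fun q : ((Fin n → Plane) × (Fin n → ℝ)) × ℝ => Htpy q.1 q.2)
      (Disks n ×ˢ Set.Icc (0 : ℝ) 1) ∧
    (∀ p : (Fin n → Plane) × (Fin n → ℝ), Htpy p 0 = (p.1, fun _ => rho p.1)) ∧
    (∀ p : (Fin n → Plane) × (Fin n → ℝ), Htpy p 1 = p) := by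
  have hne : Nonempty (Fin n) := ⟨⟨0, hn⟩⟩
  refine ⟨?_, ?_, ?_, ?_⟩
  · intro p hp t ht
    obtain ⟨ht0, ht1⟩ := ht
    have hρ := rho_pos hp
    obtain ⟨hr, hc, hd⟩ := hp
    refine ⟨?_, ?_, ?_⟩
    · intro a
      have := hr a
      simp only [Htpy]
      exact convex_pos ht0 ht1 hρ this
    · intro a
      have h3 := rho_le p.1 (Sum.inl a)
      simp only [Fv] at h3
      have hB := hc a
      have hA : ‖p.1 a‖ + rho p.1 < 1 := by linarith
      have := convex_lt ht0 ht1 hA hB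
      simp only [Htpy]
      nlinarith [this]
    · intro a b hab
      have h3 := rho_le p.1 (Sum.inr ⟨(a, b), hab⟩)
      simp only [Fv] at h3
      have hB := hd hab
      have hA : rho p.1 + rho p.1 < dist (p.1 a) (p.1 b) := by linarith
      have := convex_lt ht0 ht1 hA hB
      simp only [Htpy]
      nlinarith [this]
  · apply Continuous.continuousOn
    have hrho : Continuous fun x : Fin n → Plane => rho x := by
      have : Continuous fun x : Fin n → Plane =>
          Finset.univ.inf' Finset.univ_nonempty (fun i => Fv x i) := by
        apply Continuous.finset_inf'_apply (f := fun i x => Fv x i)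
        intro i _
        cases i with
        | inl a => exact continuous_const.sub (continuous_apply a).norm
        | inr q => exact (continuous_apply q.1.1).dist (continuous_apply q.1.2)
      rw [show (fun x : Fin n → Plane => rho x) = fun x =>
          (1 / 3) * Finset.univ.inf' Finset.univ_nonempty (fun i => Fv x i) from
          funext fun x => rho_eq x]
      exact continuous_const.mul this
    unfold Htpy
    refine Continuous.prodMk (continuous_fst.comp continuous_fst)
      (continuous_pi fun a => ?_)
    exact ((continuous_const.sub continuous_snd).mul
        (hrho.comp (continuous_fst.comp continuous_fst))).add
      (continuous_snd.mul ((continuous_apply a).comp (continuous_snd.comp continuous_fst)))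
  · intro p
    simp [Htpy]
  · intro p
    simp [Htpy]
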